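/- arXiv:2601.15124 — 2 statements merged into one kernel-verified Lean document; each statement's English description precedes it below -/
import Mathlib

section
/- For every radius r ≥ 0 there exist two finite graphs G₁, G₂ with roots v, u respectively such that the r-hop neighborhoods (balls of radius r) of v and u are isomorphic as rooted graphs, yet for some k the closed-walk counts differ: (A₁^k)_{vv} ≠ (A₂^k)_{uu}. Consequently the Walk-Spectrum Encodings of sufficiently large order distinguish v and u. -/
/-!
Root the path `0 — 1 — ⋯ — (r + 3)` at `0`, and compare it with the same path plus the edge
`(r + 1, r + 3)`, which closes a triangle at distance `r + 1` from the root. The extra edge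
neither shortens distances up to `r` nor joins two vertices of the ball of radius `r`, so the two
balls are the same rooted graph. But the path is bipartite and has no closed walk of odd length,
whereas walking out to the triangle, around it and back is a closed walk of length `2(r + 1) + 3`.
-/

open SimpleGraph

namespace SimpleGraph

variable {V : Type*} {G H : SimpleGraph V}

theorem Walk.le_add_length {f : V → ℕ} (hf : ∀ a b, G.Adj a b → f b ≤ f a + 1) {u v : V}
    (p : G.Walk u v) : f v ≤ f u + p.length := by
  induction p with
  | nil => simp
  | cons h _ ih => have := hf _ _ h; rw [Walk.length_cons]; omega

theorem Reachable.le_add_dist {f : V → ℕ} (hf : ∀ a b, G.Adj a b → f b ≤ f a + 1) {u v : V}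
    (h : G.Reachable u v) : f v ≤ f u + G.dist u v := by
  obtain ⟨p, hp⟩ := h.exists_walk_length_eq_dist
  exact hp ▸ p.le_add_length hf

theorem Walk.exists_closed_length_eq {u v : V} (p : G.Walk u v) (c : G.Walk v v) :
    ∃ q : G.Walk u u, q.length = 2 * p.length + c.length :=
  ⟨p.append (c.append p.reverse), by simp only [Walk.length_append, Walk.length_reverse]; ring⟩

theorem Coloring.card_closed_walk_eq_zero_of_odd (c : G.Coloring Bool) {u : V} {k : ℕ}
    (hk : Odd k) : Nat.card {p : G.Walk u u // p.length = k} = 0 :=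
  have : IsEmpty {p : G.Walk u u // p.length = k} :=
    ⟨fun ⟨p, hp⟩ => not_iff_self ((c.odd_length_iff_not_congr p).mp (hp ▸ hk))⟩
  Nat.card_of_isEmpty

def Iso.induceCongr {s t : Set V} (hst : s = t)
    (hadj : ∀ a ∈ s, ∀ b ∈ s, G.Adj a b ↔ H.Adj a b) : G.induce s ≃g H.induce t where
  toEquiv := Equiv.setCongr hst
  map_rel_iff' {a b} := (hadj a a.2 b b.2).symm

theorem pathGraph_exists_walk_length_eq {n : ℕ} (w : Fin (n + 1)) :
    ∃ p : (pathGraph (n + 1)).Walk 0 w, p.length = w := by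
  induction w using Fin.induction with
  | zero => exact ⟨.nil, rfl⟩
  | succ i ih =>
    obtain ⟨p, hp⟩ := ih
    exact ⟨p.concat (by simp [pathGraph_adj]), by simp [hp]⟩

/-- Edges added to a path beyond `r + 1` leave the ball of radius `r` around `0` unchanged:
`min · (r + 1)` stays `1`-Lipschitz along them. -/
theorem dist_zero_le_iff_of_pathGraph_le {n r : ℕ} {G : SimpleGraph (Fin (n + 1))}
    (hG : pathGraph (n + 1) ≤ G)
    (hf : ∀ a b, G.Adj a b → min b.val (r + 1) ≤ min a.val (r + 1) + 1) (w : Fin (n + 1)) :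
    G.dist 0 w ≤ r ↔ w.val ≤ r := by
  obtain ⟨p, hp⟩ := pathGraph_exists_walk_length_eq w
  constructor
  · intro h
    have := (p.reachable.mono hG).le_add_dist hf
    simp only [Fin.val_zero] at this
    omega
  · intro h
    calc G.dist 0 w ≤ (pathGraph (n + 1)).dist 0 w := p.reachable.dist_anti hG
      _ ≤ p.length := dist_le p
      _ ≤ r := hp ▸ h

theorem pathGraph_dist_zero_le_iff {n r : ℕ} (w : Fin (n + 1)) :
    (pathGraph (n + 1)).dist 0 w ≤ r ↔ w.val ≤ r :=
  dist_zero_le_iff_of_pathGraph_le le_rfl (fun a b h => by rw [pathGraph_adj] at h; omega) w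

end SimpleGraph

theorem walk_spectrum_encoding_ne_of_card_ne {V W : Type*} {G₁ : SimpleGraph V}
    {G₂ : SimpleGraph W} {v : V} {u : W} {k : ℕ}
    (h : Nat.card {p : G₁.Walk v v // p.length = k + 1} ≠
      Nat.card {p : G₂.Walk u u // p.length = k + 1})
    {α : ℝ} (hα : α ≠ 0) :
    (fun j : Fin (k + 1) => α ^ (j.val + 1) *
        (Nat.card {p : G₁.Walk v v // p.length = j.val + 1} : ℝ)) ≠
      fun j => α ^ (j.val + 1) * (Nat.card {p : G₂.Walk u u // p.length = j.val + 1} : ℝ) := by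
  intro heq
  have := mul_left_cancel₀ (pow_ne_zero _ hα) (congrFun heq (Fin.last k))
  exact h (by exact_mod_cast this)

def pathGraphWithTriangle (r : ℕ) : SimpleGraph (Fin (r + 4)) :=
  pathGraph (r + 4) ⊔ edge ⟨r + 1, by omega⟩ ⟨r + 3, by omega⟩

namespace pathGraphWithTriangle

variable {r : ℕ}

theorem adj_iff {a b : Fin (r + 4)} : (pathGraphWithTriangle r).Adj a b ↔
    (a.val + 1 = b.val ∨ b.val + 1 = a.val) ∨
      (a.val = r + 1 ∧ b.val = r + 3 ∨ a.val = r + 3 ∧ b.val = r + 1) := by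
  simp only [pathGraphWithTriangle, sup_adj, pathGraph_adj, edge_adj, Fin.ext_iff]
  omega

theorem pathGraph_le : pathGraph (r + 4) ≤ pathGraphWithTriangle r := le_sup_left

theorem dist_zero_le_iff (w : Fin (r + 4)) :
    (pathGraphWithTriangle r).dist 0 w ≤ r ↔ w.val ≤ r :=
  dist_zero_le_iff_of_pathGraph_le (n := r + 3) pathGraph_le
    (fun _ _ h => by rw [adj_iff] at h; omega) w

theorem adj_iff_pathGraph_adj {a b : Fin (r + 4)} (ha : a.val ≤ r) :
    (pathGraphWithTriangle r).Adj a b ↔ (pathGraph (r + 4)).Adj a b := by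
  rw [adj_iff, pathGraph_adj]
  omega

theorem exists_closed_walk_length_eq :
    ∃ c : (pathGraphWithTriangle r).Walk 0 0, c.length = 2 * r + 5 := by
  obtain ⟨p, hp⟩ := pathGraph_exists_walk_length_eq (⟨r + 1, by omega⟩ : Fin (r + 4))
  have adj {a b : Fin (r + 4)} (h : a.val + 1 = b.val ∨ a.val = r + 3 ∧ b.val = r + 1) :
      (pathGraphWithTriangle r).Adj a b := by
    rw [adj_iff]; omega
  let triangle : (pathGraphWithTriangle r).Walk ⟨r + 1, by omega⟩ ⟨r + 1, by omega⟩ :=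
    .cons (v := ⟨r + 2, by omega⟩) (adj (.inl rfl)) <|
      .cons (v := ⟨r + 3, by omega⟩) (adj (.inl rfl)) <| .cons (adj (.inr ⟨rfl, rfl⟩)) .nil
  obtain ⟨c, hc⟩ := (p.mapLe pathGraph_le).exists_closed_length_eq triangle
  exact ⟨c, by rw [hc, Walk.length_map, hp]; rfl⟩

end pathGraphWithTriangle

/-- For every radius `r` there exist two finite graphs with roots `v` and `u` whose balls of
radius `r` (induced subgraphs on vertices at distance `≤ r`) are isomorphic as rooted graphs,
yet for some `k` the numbers of closed walks of length `k` at `v` and `u` differ; consequently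
the Walk-Spectrum Encodings `(α^k · #closed walks of length k)_{k=1}^K` of sufficiently large
order `K` distinguish `v` and `u`. -/
theorem exists_rooted_ball_iso_but_walk_counts_ne (r : ℕ) :
    ∃ (n₁ n₂ : ℕ) (G₁ : SimpleGraph (Fin n₁)) (G₂ : SimpleGraph (Fin n₂))
      (v : Fin n₁) (u : Fin n₂),
      (∃ φ : (G₁.induce {w | G₁.dist v w ≤ r}) ≃g (G₂.induce {w | G₂.dist u w ≤ r}),
          φ ⟨v, by simp [SimpleGraph.dist_self]⟩ = ⟨u, by simp [SimpleGraph.dist_self]⟩) ∧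
      (∃ k : ℕ, Nat.card {p : G₁.Walk v v // p.length = k} ≠
          Nat.card {p : G₂.Walk u u // p.length = k}) ∧
      ∀ α : ℝ, 0 < α → α < 1 → ∃ K : ℕ,
        (fun j : Fin K => α ^ (j.val + 1) *
            (Nat.card {p : G₁.Walk v v // p.length = j.val + 1} : ℝ)) ≠
        (fun j : Fin K => α ^ (j.val + 1) *
            (Nat.card {p : G₂.Walk u u // p.length = j.val + 1} : ℝ)) := by
  classical
  have balls_eq : {w | (pathGraph (r + 4)).dist 0 w ≤ r} =
      {w | (pathGraphWithTriangle r).dist 0 w ≤ r} := by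
    ext w
    exact (pathGraph_dist_zero_le_iff (n := r + 3) w).trans
      (pathGraphWithTriangle.dist_zero_le_iff w).symm
  obtain ⟨c, hc⟩ := pathGraphWithTriangle.exists_closed_walk_length_eq (r := r)
  have counts_ne : Nat.card {p : (pathGraph (r + 4)).Walk 0 0 // p.length = 2 * r + 5} ≠
      Nat.card {p : (pathGraphWithTriangle r).Walk 0 0 // p.length = 2 * r + 5} := by
    rw [(pathGraph.bicoloring _).card_closed_walk_eq_zero_of_odd ⟨r + 2, by ring⟩]
    exact (Nat.card_pos_iff.mpr ⟨⟨⟨c, hc⟩⟩, inferInstance⟩).ne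
  refine ⟨r + 4, r + 4, pathGraph (r + 4), pathGraphWithTriangle r, 0, 0,
    ⟨Iso.induceCongr balls_eq fun a ha _ _ => ?_, rfl⟩, ⟨_, counts_ne⟩,
    fun α hα _ => ⟨_, walk_spectrum_encoding_ne_of_card_ne counts_ne hα.ne'⟩⟩
  exact (pathGraphWithTriangle.adj_iff_pathGraph_adj ((pathGraph_dist_zero_le_iff a).mp ha)).symm
end

section
/- In a graph formed by a path x_0,…,x_{r+1} with a cycle C attached at x_{r+1} (sharing only x_{r+1}), any closed walk at x_0 that visits a vertex of C not on the path must traverse the path segment to x_{r+1} and back, hence has length at least 2(r+1) + g, where g is the length of the shortest closed walk of C at x_{r+1} using cycle edges; in particular every closed walk at x_0 of length ≤ 2(r+1) stays within the path. -/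
/-!
The potential `v ↦ min v (r + 2)` changes by at most one along each edge of the graph, so a
closed walk at `x_0` that reaches a cycle vertex other than `x_{r+1}` (potential `r + 2`) needs
at least `r + 2` steps there and `r + 2` steps back. On the other hand, going from `x_{r+1}`
to a cycle neighbour and straight back is a closed walk of length `2` in the cycle, and no
positive closed walk in a simple graph is shorter, so the infimum in the statement is `2`.
-/

/-- The graph on `Fin (r+1+q)` consisting of a path `x_0, …, x_{r+1}` (the vertices with
values `0, …, r+1`) together with a cycle of length `q` through the vertices with values
`r+1, …, r+q`, attached to the path exactly at `x_{r+1}`. -/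
def pathCycleGraph (r q : ℕ) : SimpleGraph (Fin (r + 1 + q)) :=
  SimpleGraph.fromRel (fun a b => b.val = a.val + 1 ∨ (a.val = r + 1 ∧ b.val = r + q))

/-- The subgraph of `pathCycleGraph r q` consisting of the cycle edges only (both endpoints
among the cycle vertices, i.e. with values `≥ r+1`). -/
def cyclePart (r q : ℕ) : SimpleGraph (Fin (r + 1 + q)) :=
  SimpleGraph.fromRel (fun a b =>
    (b.val = a.val + 1 ∨ (a.val = r + 1 ∧ b.val = r + q)) ∧ r + 1 ≤ a.val ∧ r + 1 ≤ b.val)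

namespace SimpleGraph

variable {V : Type*} {G : SimpleGraph V}

lemma Walk.le_add_length_of_adj_imp_le {φ : V → ℕ} (hφ : ∀ a b, G.Adj a b → φ b ≤ φ a + 1)
    {u v : V} (w : G.Walk u v) : φ v ≤ φ u + w.length := by
  induction w with
  | nil => simp
  | cons h p ih =>
    rw [Walk.length_cons]
    have := hφ _ _ h
    omega

lemma Walk.two_mul_le_add_length_of_mem_support [DecidableEq V] {φ : V → ℕ}
    (hφ : ∀ a b, G.Adj a b → φ b ≤ φ a + 1) {u t : V} (w : G.Walk u u) (ht : t ∈ w.support) :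
    2 * φ t ≤ 2 * φ u + w.length := by
  have hto := (w.takeUntil t ht).le_add_length_of_adj_imp_le hφ
  have hback := (w.dropUntil t ht).reverse.le_add_length_of_adj_imp_le hφ
  have hsplit := congrArg Walk.length (w.take_spec ht)
  rw [Walk.length_reverse] at hback
  rw [Walk.length_append] at hsplit
  omega

lemma Adj.sInf_pos_closedWalk_length_eq_two {x y : V} (h : G.Adj x y) :
    sInf {L : ℕ | 0 < L ∧ ∃ c : G.Walk x x, c.length = L} = 2 := by
  have hback : 2 ∈ {L : ℕ | 0 < L ∧ ∃ c : G.Walk x x, c.length = L} :=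
    ⟨two_pos, .cons h (.cons h.symm .nil), rfl⟩
  refine le_antisymm (Nat.sInf_le hback) (le_csInf ⟨2, hback⟩ ?_)
  rintro L ⟨hL, c, rfl⟩
  have hne : c.length ≠ 1 := fun h1 => (c.adj_of_length_eq_one h1).ne rfl
  omega

end SimpleGraph

open SimpleGraph

lemma pathCycleGraph_min_le_min_add_one (r q : ℕ) (a b : Fin (r + 1 + q))
    (h : (pathCycleGraph r q).Adj a b) : min b.val (r + 2) ≤ min a.val (r + 2) + 1 := by
  rw [pathCycleGraph, fromRel_adj] at h
  omega

lemma cyclePart_adj_succ (r q : ℕ) (hq : 2 ≤ q) :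
    (cyclePart r q).Adj ⟨r + 1, by omega⟩ ⟨r + 2, by omega⟩ := by
  rw [cyclePart, fromRel_adj]
  simp

/-- In the path-with-attached-cycle graph, any closed walk at the root `x_0` that visits a
cycle vertex not on the path (value `> r+1`) must traverse the path segment to `x_{r+1}` and
back, hence has length at least `2(r+1) + g`, where `g` is the length of a shortest positive
closed walk at `x_{r+1}` using only cycle edges.  In particular, every closed walk at `x_0`
of length `≤ 2(r+1)` stays within the path. -/
theorem pathCycleGraph_closed_walk_length_bound (r q : ℕ) (hq : 3 ≤ q) :
    (∀ w : (pathCycleGraph r q).Walk ⟨0, by omega⟩ ⟨0, by omega⟩,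
        (∃ t ∈ w.support, r + 1 < t.val) →
        2 * (r + 1) +
            sInf {L : ℕ | 0 < L ∧
              ∃ c : (cyclePart r q).Walk ⟨r + 1, by omega⟩ ⟨r + 1, by omega⟩, c.length = L}
          ≤ w.length) ∧
    (∀ w : (pathCycleGraph r q).Walk ⟨0, by omega⟩ ⟨0, by omega⟩,
        w.length ≤ 2 * (r + 1) → ∀ t ∈ w.support, t.val ≤ r + 1) := by
  have hreach : ∀ w : (pathCycleGraph r q).Walk ⟨0, by omega⟩ ⟨0, by omega⟩,
      ∀ t ∈ w.support, r + 1 < t.val → 2 * (r + 2) ≤ w.length := by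
    intro w t ht htr
    have := w.two_mul_le_add_length_of_mem_support
      (φ := fun v => min v.val (r + 2)) (pathCycleGraph_min_le_min_add_one r q) ht
    simp only at this
    omega
  rw [(cyclePart_adj_succ r q (by omega)).sInf_pos_closedWalk_length_eq_two]
  refine ⟨fun w ⟨t, ht, htr⟩ => ?_, fun w hw t ht => ?_⟩
  · have := hreach w t ht htr
    omega
  · by_contra! htr
    have := hreach w t ht htr
    omega
end
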